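/- (Lemma 4 of the paper.) In the closed-loop coordinated system, the mean-field process is a controlled Markov chain with control Γ_t whose transition kernel does not depend on the strategy: for every coordination strategy ψ, every time t, every mean-field history z_{1:t} with positive probability, every count vector z' with ∑_a z'(a) = n, and any fixed representative x0 ∈ H(z_t), P(Z_{t+1} = z' | Z_{1:t} = z_{1:t}) equals the probability, under w : Fin n → 𝒲 with i.i.d. coordinates of PMF P_{W_t}, of the event {w : emp(i ↦ f_t(x0 i, γ_t(x0 i), w i, z_t)) = z'}, where γ_t = ψ_t(z_{1:t}). This quantity depends only on (z_t, γ_t) and not on z_{1:t-1}, on the choice of x0 ∈ H(z_t), or on ψ. -/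

import Mathlib

/-!
Conditioning on the mean-field history `z_{1:t}` fixes the prescription `γ_t = ψ_t(z_{1:t})`,
so given a state profile `x` with `emp x = z_t` the next profile is
`i ↦ f_t(x i, γ_t(x i), w i, z_t)` with i.i.d. noise `w`. Two profiles with the same empirical
counts differ by a permutation of the subsystems, and permuting the coordinates of an i.i.d. noise
vector preserves its law, so the law of the next empirical count is the same for every such `x`.
Summing over the histories consistent with `z_{1:t}` factors the joint probability as
`P(Z_{1:t} = z_{1:t})` times this common value.
-/

open scoped ENNReal

def emp {X : Type*} [DecidableEq X] {n : ℕ} (x : Fin n → X) : X → ℕ :=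
  fun a => (Finset.univ.filter (fun i => x i = a)).card

def Hset {X : Type*} [Fintype X] [DecidableEq X] (n : ℕ) (m : X → ℕ) : Finset (Fin n → X) :=
  Finset.univ.filter (fun x => emp x = m)

noncomputable def iid {W : Type*} [Fintype W] (n : ℕ) (ν : PMF W) : PMF (Fin n → W) :=
  PMF.ofFintype (fun w => ∏ i, ν (w i)) (by
    have h : ∑ j : W, ν j = 1 := by
      first
        | rw [← ν.tsum_coe, tsum_fintype]
        | simpa [tsum_fintype] using ν.tsum_coe
    rw [← Fintype.prod_sum]; simp [h])

variable {X U W : Type*} [Fintype X] [DecidableEq X] [Fintype U] [Fintype W]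

/-- The closed-loop law of the state trajectory `(X_0, …, X_t)` in the coordinated system:
initial states i.i.d. `PX`; the coordinator applies the prescription `ψ t z_{0:t} : X → U`
to each local state; local dynamics `f` driven by i.i.d. noises `PW t`. -/
noncomputable def hist (n : ℕ) (PX : PMF X) (PW : ℕ → PMF W)
    (f : ℕ → X → U → W → (X → ℕ) → X)
    (ψ : (t : ℕ) → (Fin (t + 1) → (X → ℕ)) → X → U) :
    (t : ℕ) → PMF (Fin (t + 1) → (Fin n → X))
  | 0 => (iid n PX).map (fun x _ => x)
  | t + 1 =>
    (hist n PX PW f ψ t).bind (fun xs =>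
      (iid n (PW t)).map (fun w =>
        Fin.snoc xs (fun i =>
          f t (xs (Fin.last t) i)
            (ψ t (fun s => emp (xs s)) (xs (Fin.last t) i))
            (w i) (emp (xs (Fin.last t))))))

open Finset

namespace PMF

variable {α β : Type*} [Fintype α] [Fintype β]

lemma sum_fintype_eq_one (p : PMF α) : ∑ a, p a = 1 := by
  rw [← p.tsum_coe, tsum_fintype]

lemma sum_filter_map_apply (p : PMF α) (F : α → β) (Q : β → Prop) [DecidablePred Q] :
    ∑ b ∈ univ.filter Q, p.map F b = ∑ a ∈ univ.filter (fun a => Q (F a)), p a := by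
  classical
  simp only [map_apply, tsum_fintype]
  rw [Finset.sum_comm, Finset.sum_filter]
  refine Finset.sum_congr rfl fun a _ => ?_
  rw [Finset.sum_ite_eq' (univ.filter Q)]
  simp only [mem_filter, mem_univ, true_and]

lemma sum_filter_bind_apply (p : PMF α) (g : α → PMF β) (Q : β → Prop) [DecidablePred Q] :
    ∑ b ∈ univ.filter Q, p.bind g b = ∑ a, p a * ∑ b ∈ univ.filter Q, g a b := by
  simp only [bind_apply, tsum_fintype, Finset.mul_sum]
  exact Finset.sum_comm

end PMF

section Empirical

variable {α β : Type*} [DecidableEq α] {n : ℕ}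

lemma emp_comp_perm (x : Fin n → α) (σ : Equiv.Perm (Fin n)) : emp (x ∘ σ) = emp x := by
  funext a
  exact Finset.card_bij' (fun i _ => σ i) (fun i _ => σ.symm i) (by simp) (by simp) (by simp)
    (by simp)

lemma exists_perm_eq_comp_of_emp_eq {x y : Fin n → α} (h : emp x = emp y) :
    ∃ σ : Equiv.Perm (Fin n), y = x ∘ σ := by
  have hfiber : ∀ a, Fintype.card {i // y i = a} = Fintype.card {i // x i = a} := by
    intro a
    rw [Fintype.card_subtype, Fintype.card_subtype]
    exact (congrFun h a).symm
  let σ := Equiv.ofFiberEquiv fun a => Fintype.equivOfCardEq (hfiber a)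
  exact ⟨σ, funext fun i => (Equiv.ofFiberEquiv_map _ i).symm⟩

lemma iid_comp_perm [Fintype β] (ν : PMF β) (σ : Equiv.Perm (Fin n)) (w : Fin n → β) :
    iid n ν (w ∘ σ) = iid n ν w := by
  simp only [iid, PMF.ofFintype_apply, Function.comp_apply]
  exact Equiv.prod_comp σ fun i => ν (w i)

lemma sum_iid_emp_eq_of_emp_eq [Fintype β] {γ : Type*} [Fintype γ] [DecidableEq γ] (ν : PMF β)
    (g : α → β → γ) (m : γ → ℕ) {x y : Fin n → α} (h : emp x = emp y) :
    ∑ w ∈ univ.filter (fun w : Fin n → β => emp (fun i => g (x i) (w i)) = m), iid n ν w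
      = ∑ w ∈ univ.filter (fun w : Fin n → β => emp (fun i => g (y i) (w i)) = m), iid n ν w := by
  obtain ⟨σ, rfl⟩ := exists_perm_eq_comp_of_emp_eq h
  simp only [Finset.sum_filter]
  refine Fintype.sum_equiv (σ.symm.arrowCongr (Equiv.refl β)) _ _ fun w => ?_
  have hσ : σ.symm.arrowCongr (Equiv.refl β) w = w ∘ σ := by
    funext i
    simp [Equiv.arrowCongr_apply]
  rw [hσ, iid_comp_perm]
  exact congrArg (fun k => if k = m then iid n ν w else 0)
    (emp_comp_perm (fun i => g (x i) (w i)) σ).symm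

end Empirical

section ClosedLoop

variable {𝒳 𝒰 𝒲 : Type*} [Fintype 𝒳] [DecidableEq 𝒳] [Fintype 𝒲]

def closedLoopStep {n : ℕ} (f : ℕ → 𝒳 → 𝒰 → 𝒲 → (𝒳 → ℕ) → 𝒳)
    (ψ : (t : ℕ) → (Fin (t + 1) → (𝒳 → ℕ)) → 𝒳 → 𝒰) (t : ℕ)
    (xs : Fin (t + 1) → (Fin n → 𝒳)) (w : Fin n → 𝒲) : Fin n → 𝒳 :=
  fun i => f t (xs (Fin.last t) i) (ψ t (fun s => emp (xs s)) (xs (Fin.last t) i)) (w i)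
    (emp (xs (Fin.last t)))

variable {n : ℕ} {PX : PMF 𝒳} {PW : ℕ → PMF 𝒲} {f : ℕ → 𝒳 → 𝒰 → 𝒲 → (𝒳 → ℕ) → 𝒳}
  {ψ : (t : ℕ) → (Fin (t + 1) → (𝒳 → ℕ)) → 𝒳 → 𝒰} {t : ℕ}

lemma sum_filter_hist_succ (Q : (Fin (t + 2) → (Fin n → 𝒳)) → Prop) [DecidablePred Q] :
    ∑ xs ∈ univ.filter Q, hist n PX PW f ψ (t + 1) xs
      = ∑ xs, hist n PX PW f ψ t xs *
          ∑ w ∈ univ.filter (fun w => Q (Fin.snoc xs (closedLoopStep f ψ t xs w))),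
            iid n (PW t) w := by
  rw [hist, PMF.sum_filter_bind_apply]
  simp only [PMF.sum_filter_map_apply]
  rfl

lemma sum_hist_succ_history_and_last (z : Fin (t + 1) → (𝒳 → ℕ)) (B : (Fin n → 𝒳) → Prop)
    [DecidablePred B] :
    ∑ xs ∈ univ.filter (fun xs : Fin (t + 2) → (Fin n → 𝒳) =>
        (∀ s : Fin (t + 1), emp (xs s.castSucc) = z s) ∧ B (xs (Fin.last (t + 1)))),
        hist n PX PW f ψ (t + 1) xs
      = ∑ xs ∈ univ.filter (fun xs : Fin (t + 1) → (Fin n → 𝒳) => ∀ s, emp (xs s) = z s),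
          hist n PX PW f ψ t xs *
            ∑ w ∈ univ.filter (fun w => B (closedLoopStep f ψ t xs w)), iid n (PW t) w := by
  rw [sum_filter_hist_succ, Finset.sum_filter]
  refine Finset.sum_congr rfl fun xs _ => ?_
  simp only [Fin.snoc_castSucc, Fin.snoc_last]
  split_ifs with h <;> simp [h]

lemma sum_hist_succ_history (z : Fin (t + 1) → (𝒳 → ℕ)) :
    ∑ xs ∈ univ.filter (fun xs : Fin (t + 2) → (Fin n → 𝒳) =>
        ∀ s : Fin (t + 1), emp (xs s.castSucc) = z s), hist n PX PW f ψ (t + 1) xs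
      = ∑ xs ∈ univ.filter (fun xs : Fin (t + 1) → (Fin n → 𝒳) => ∀ s, emp (xs s) = z s),
          hist n PX PW f ψ t xs := by
  simpa [PMF.sum_fintype_eq_one] using
    sum_hist_succ_history_and_last (PX := PX) (f := f) (ψ := ψ) z (fun _ => True)

lemma sum_iid_closedLoopStep_emp_eq {z : Fin (t + 1) → (𝒳 → ℕ)} {xs : Fin (t + 1) → (Fin n → 𝒳)}
    {x0 : Fin n → 𝒳} (hxs : ∀ s, emp (xs s) = z s) (hx0 : emp x0 = z (Fin.last t))
    (z' : 𝒳 → ℕ) :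
    ∑ w ∈ univ.filter (fun w => emp (closedLoopStep f ψ t xs w) = z'), iid n (PW t) w
      = ∑ w ∈ univ.filter (fun w : Fin n → 𝒲 =>
          emp (fun i => f t (x0 i) (ψ t z (x0 i)) (w i) (z (Fin.last t))) = z'),
          iid n (PW t) w := by
  have hz : (fun s => emp (xs s)) = z := funext hxs
  unfold closedLoopStep
  rw [hz, hxs (Fin.last t)]
  exact sum_iid_emp_eq_of_emp_eq _ (fun x w => f t x (ψ t z x) w (z (Fin.last t))) z'
    ((hxs _).trans hx0.symm)

end ClosedLoop

theorem stmt6_general (n : ℕ) (PX : PMF X) (PW : ℕ → PMF W)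
    (f : ℕ → X → U → W → (X → ℕ) → X)
    (ψ : (t : ℕ) → (Fin (t + 1) → (X → ℕ)) → X → U)
    (t : ℕ) (z : Fin (t + 1) → (X → ℕ)) (z' : X → ℕ)
    (hz : 0 < ∑ xs ∈ Finset.univ.filter
        (fun xs : Fin (t + 2) → (Fin n → X) => ∀ s : Fin (t + 1), emp (xs s.castSucc) = z s),
        hist n PX PW f ψ (t + 1) xs)
    (x0 : Fin n → X) (hx0 : x0 ∈ Hset n (z (Fin.last t))) :
    (∑ xs ∈ Finset.univ.filter
        (fun xs : Fin (t + 2) → (Fin n → X) =>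
          (∀ s : Fin (t + 1), emp (xs s.castSucc) = z s) ∧
            emp (xs (Fin.last (t + 1))) = z'),
        hist n PX PW f ψ (t + 1) xs)
      / (∑ xs ∈ Finset.univ.filter
          (fun xs : Fin (t + 2) → (Fin n → X) =>
            ∀ s : Fin (t + 1), emp (xs s.castSucc) = z s),
          hist n PX PW f ψ (t + 1) xs)
    = ∑ w ∈ Finset.univ.filter
        (fun w : Fin n → W =>
          emp (fun i =>
            f t (x0 i) (ψ t z (x0 i)) (w i) (z (Fin.last t))) = z'),
        iid n (PW t) w := by
  have hx0z : emp x0 = z (Fin.last t) := (Finset.mem_filter.1 hx0).2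
  rw [sum_hist_succ_history] at hz ⊢
  rw [sum_hist_succ_history_and_last z (fun x => emp x = z'),
    Finset.sum_congr rfl fun xs hxs => congrArg (hist n PX PW f ψ t xs * ·)
      (sum_iid_closedLoopStep_emp_eq (Finset.mem_filter.1 hxs).2 hx0z z'),
    ← Finset.sum_mul, mul_comm]
  exact ENNReal.mul_div_cancel_right hz.ne'
    (ENNReal.sum_ne_top.2 fun xs _ => PMF.apply_ne_top _ xs)

/-- Lemma 4: the mean field is a controlled Markov chain with control `Γ_t = ψ t z`:
for any positive-probability mean-field history `z_{0:t}`, any next mean field `z'` and any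
representative `x0 ∈ H(z_t)`, `P(Z_{t+1} = z' | Z_{0:t} = z)` equals the i.i.d.-noise
probability that `emp (i ↦ f_t(x0 i, γ_t(x0 i), w i, z_t)) = z'`; hence it depends only on
`(z_t, γ_t)` and not on the earlier history, the representative `x0`, or the strategy. -/
theorem stmt6 (n : ℕ) (hn : 1 ≤ n) (PX : PMF X) (PW : ℕ → PMF W)
    (f : ℕ → X → U → W → (X → ℕ) → X)
    (ψ : (t : ℕ) → (Fin (t + 1) → (X → ℕ)) → X → U)
    (t : ℕ) (z : Fin (t + 1) → (X → ℕ)) (z' : X → ℕ) (hz' : ∑ a, z' a = n)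
    (hz : 0 < ∑ xs ∈ Finset.univ.filter
        (fun xs : Fin (t + 2) → (Fin n → X) => ∀ s : Fin (t + 1), emp (xs s.castSucc) = z s),
        hist n PX PW f ψ (t + 1) xs)
    (x0 : Fin n → X) (hx0 : x0 ∈ Hset n (z (Fin.last t))) :
    (∑ xs ∈ Finset.univ.filter
        (fun xs : Fin (t + 2) → (Fin n → X) =>
          (∀ s : Fin (t + 1), emp (xs s.castSucc) = z s) ∧
            emp (xs (Fin.last (t + 1))) = z'),
        hist n PX PW f ψ (t + 1) xs)
      / (∑ xs ∈ Finset.univ.filter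
          (fun xs : Fin (t + 2) → (Fin n → X) =>
            ∀ s : Fin (t + 1), emp (xs s.castSucc) = z s),
          hist n PX PW f ψ (t + 1) xs)
    = ∑ w ∈ Finset.univ.filter
        (fun w : Fin n → W =>
          emp (fun i =>
            f t (x0 i) (ψ t z (x0 i)) (w i) (z (Fin.last t))) = z'),
        iid n (PW t) w :=
  stmt6_general n PX PW f ψ t z z' hz x0 hx0
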